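/- Let (a,b) be a perplex parameter and let f, g : ℝ² → ℝ² be ℙ_{a,b}-differentiable at x ∈ ℝ² with derivatives f'(x) and g'(x). Then the product f * g (defined pointwise by (f*g)(y) := f(y) * g(y)) is ℙ_{a,b}-differentiable at x with derivative (f*g)'(x) = (f'(x) * g(x)) + (f(x) * g'(x)); moreover f + g is ℙ_{a,b}-differentiable at x with derivative f'(x) + g'(x). -/

import Mathlib

open Filter Topology

noncomputable section

/-- The perplex product on `ℝ²` determined by the parameters `a = (a₁,a₂,a₃)`,
`b = (b₁,b₂,b₃)`. -/
def pmul (a₁ a₂ a₃ b₁ b₂ b₃ : ℝ) (x y : ℝ × ℝ) : ℝ × ℝ :=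
  (a₁ * x.1 * y.1 + a₂ * (x.1 * y.2 + x.2 * y.1) + a₃ * x.2 * y.2,
   b₁ * x.1 * y.1 + b₂ * (x.1 * y.2 + x.2 * y.1) + b₃ * x.2 * y.2)

/-- `(a,b)` is a perplex parameter: conditions (i)-(iv). -/
def IsPerplexParam (a₁ a₂ a₃ b₁ b₂ b₃ : ℝ) : Prop :=
  a₁ * a₃ - a₂ ^ 2 ≠ 0 ∧ a₁ * b₂ - a₂ * b₁ ≠ 0 ∧
    a₂ * b₂ - a₃ * b₁ = 0 ∧ a₁ * a₃ - a₂ ^ 2 + a₂ * b₃ - a₃ * b₂ = 0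

/-- The multiplicative identity `𝟙` of the perplex algebra. -/
def pone (a₁ a₂ b₁ b₂ : ℝ) : ℝ × ℝ :=
  (1 / (a₁ * b₂ - a₂ * b₁)) • ((b₂, -b₁) : ℝ × ℝ)

/-- The perplex norm `N`. -/
def pN (a₁ a₂ a₃ b₁ b₂ b₃ : ℝ) (x : ℝ × ℝ) : ℝ :=
  (a₁ * b₂ - a₂ * b₁) * x.1 ^ 2 + (a₁ * b₃ - a₃ * b₁) * x.1 * x.2 -
    (a₁ * a₃ - a₂ ^ 2) * x.2 ^ 2

/-- The Euclidean norm on `ℝ²`. -/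
noncomputable def enorm2 (x : ℝ × ℝ) : ℝ := Real.sqrt (x.1 ^ 2 + x.2 ^ 2)

open Classical in
/-- The `*`-inverse of `x` (junk value `0` if `x` is not invertible). -/
noncomputable def pinv (a₁ a₂ a₃ b₁ b₂ b₃ : ℝ) (x : ℝ × ℝ) : ℝ × ℝ :=
  if h : ∃ y, pmul a₁ a₂ a₃ b₁ b₂ b₃ x y = pone a₁ a₂ b₁ b₂ then h.choose else 0

/-- A sequence of invertible elements converging to `0` that is positively
separated from the zero-divisor directions. -/
def PosSep (a₁ a₂ a₃ b₁ b₂ b₃ : ℝ) (h : ℕ → ℝ × ℝ) : Prop :=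
  (∀ n, ∃ y, pmul a₁ a₂ a₃ b₁ b₂ b₃ (h n) y = pone a₁ a₂ b₁ b₂) ∧
    Tendsto h atTop (nhds 0) ∧
      ∃ c > 0, ∀ n, c ≤ |pN a₁ a₂ a₃ b₁ b₂ b₃ ((enorm2 (h n))⁻¹ • h n)|

/-- `f` is `ℙ_{a,b}`-differentiable at `x` with derivative `L`: the difference
quotients along every positively separated sequence converge, on a whole
neighborhood of `x`, to a value depending continuously on the base point, with
value `L` at `x`. -/
def PDiffAt (a₁ a₂ a₃ b₁ b₂ b₃ : ℝ) (f : ℝ × ℝ → ℝ × ℝ) (L : ℝ × ℝ)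
    (x : ℝ × ℝ) : Prop :=
  ∃ U ∈ nhds x, ∃ d : ℝ × ℝ → ℝ × ℝ, d x = L ∧ ContinuousOn d U ∧
    ∀ y ∈ U, ∀ h : ℕ → ℝ × ℝ, PosSep a₁ a₂ a₃ b₁ b₂ b₃ h →
      Tendsto
        (fun n => pmul a₁ a₂ a₃ b₁ b₂ b₃ (f (y + h n) - f y)
          (pinv a₁ a₂ a₃ b₁ b₂ b₃ (h n)))
        atTop (nhds (d y))

/-! The sum rule is immediate. For the product rule, by associativity and commutativity,
`((f g)(y + h) - (f g)(y)) ∗ h⁻¹`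
  `= ((f(y + h) - f(y)) ∗ h⁻¹) ∗ g(y + h) + f(y) ∗ ((g(y + h) - g(y)) ∗ h⁻¹)`,
so it remains to know that `f` and `g` are continuous near `x` (which also makes the new derivative
`df ∗ g + f ∗ dg` continuous). This follows from differentiability: on a line `τ ↦ y + τ • e` in an
invertible direction `e` the perplex derivative becomes the ordinary derivative `d(y + τ • e) ∗ e`,
which is bounded near `x`, so by the mean value theorem `f` is Lipschitz along two independent
invertible directions. -/

def PDiffQuotTendsto (a₁ a₂ a₃ b₁ b₂ b₃ : ℝ) (f : ℝ × ℝ → ℝ × ℝ) (y D : ℝ × ℝ) : Prop :=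
  ∀ h : ℕ → ℝ × ℝ, PosSep a₁ a₂ a₃ b₁ b₂ b₃ h →
    Tendsto (fun n => pmul a₁ a₂ a₃ b₁ b₂ b₃ (f (y + h n) - f y) (pinv a₁ a₂ a₃ b₁ b₂ b₃ (h n)))
      atTop (𝓝 D)

section

variable {a₁ a₂ a₃ b₁ b₂ b₃ : ℝ}

local infixl:70 " ∗ " => pmul a₁ a₂ a₃ b₁ b₂ b₃

-- Together with (iii) and (iv), this identity is what associativity of `∗` needs.
lemma IsPerplexParam.b_identity (hp : IsPerplexParam a₁ a₂ a₃ b₁ b₂ b₃) :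
    b₂ ^ 2 - b₁ * b₃ + a₂ * b₁ - a₁ * b₂ = 0 := by
  obtain ⟨h1, -, h3, h4⟩ := hp
  rcases eq_or_ne a₂ 0 with rfl | ha₂
  · have ha₃ : a₃ ≠ 0 := fun h => h1 (by rw [h]; ring)
    have hb₁ : b₁ = 0 := (mul_eq_zero.mp (by linarith : a₃ * b₁ = 0)).resolve_left ha₃
    have hb₂ : b₂ = a₁ := by
      have := (mul_eq_zero.mp (by linear_combination h4 : a₃ * (a₁ - b₂) = 0)).resolve_left ha₃
      linarith
    rw [hb₁, hb₂]; ring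
  · apply mul_left_cancel₀ ha₂
    linear_combination (b₂ - a₁) * h3 - b₁ * h4

lemma pmul_comm (x y : ℝ × ℝ) : x ∗ y = y ∗ x := by
  ext <;> simp only [pmul] <;> ring

lemma pmul_assoc (hp : IsPerplexParam a₁ a₂ a₃ b₁ b₂ b₃) (x y z : ℝ × ℝ) :
    x ∗ y ∗ z = x ∗ (y ∗ z) := by
  have hb := hp.b_identity
  obtain ⟨-, -, h3, h4⟩ := hp
  ext <;> simp only [pmul]
  · linear_combination (x.2*y.1*z.1 - x.1*y.1*z.2) * h3 + (x.2*y.2*z.1 - x.1*y.2*z.2) * h4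
  · linear_combination (x.1*y.2*z.2 - x.2*y.2*z.1) * h3 + (x.2*y.1*z.1 - x.1*y.1*z.2) * hb

lemma pmul_add_left (u v w : ℝ × ℝ) : (u + v) ∗ w = u ∗ w + v ∗ w := by
  ext <;> simp only [pmul, Prod.fst_add, Prod.snd_add] <;> ring

lemma pmul_smul_left (t : ℝ) (u w : ℝ × ℝ) : (t • u) ∗ w = t • (u ∗ w) := by
  ext <;> simp only [pmul, Prod.smul_fst, Prod.smul_snd, smul_eq_mul] <;> ring

lemma pmul_smul_right (t : ℝ) (u w : ℝ × ℝ) : u ∗ (t • w) = t • (u ∗ w) := by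
  rw [pmul_comm, pmul_smul_left, pmul_comm]

lemma pmul_pone (hp : IsPerplexParam a₁ a₂ a₃ b₁ b₂ b₃) (x : ℝ × ℝ) :
    x ∗ pone a₁ a₂ b₁ b₂ = x := by
  have hb := hp.b_identity
  obtain ⟨-, hA, h3, -⟩ := hp
  have hu : 1 / (a₁ * b₂ - a₂ * b₁) * (a₁ * b₂ - a₂ * b₁) = 1 := one_div_mul_cancel hA
  ext <;> simp only [pmul, pone, Prod.smul_mk, smul_eq_mul]
  · linear_combination 1 / (a₁ * b₂ - a₂ * b₁) * x.2 * h3 + x.1 * hu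
  · linear_combination 1 / (a₁ * b₂ - a₂ * b₁) * x.2 * hb + x.2 * hu

lemma pone_pmul (hp : IsPerplexParam a₁ a₂ a₃ b₁ b₂ b₃) (x : ℝ × ℝ) :
    pone a₁ a₂ b₁ b₂ ∗ x = x := by
  rw [pmul_comm, pmul_pone hp]

-- `w` plays the role of the conjugate of `x`.
lemma exists_pmul_eq_pone (hp : IsPerplexParam a₁ a₂ a₃ b₁ b₂ b₃) {x : ℝ × ℝ}
    (hN : pN a₁ a₂ a₃ b₁ b₂ b₃ x ≠ 0) : ∃ y, x ∗ y = pone a₁ a₂ b₁ b₂ := by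
  have hb := hp.b_identity
  obtain ⟨-, hA, h3, h4⟩ := hp
  set w : ℝ × ℝ := (b₂ * (b₂ * x.1 + b₃ * x.2) + b₁ * (a₂ * x.1 + a₃ * x.2),
    -(b₂ * (b₁ * x.1 + b₂ * x.2) + b₁ * (a₁ * x.1 + a₂ * x.2)))
  have hw : x ∗ w = pN a₁ a₂ a₃ b₁ b₂ b₃ x • (b₂, -b₁) := by
    ext <;> simp only [w, pmul, pN, Prod.smul_mk, smul_eq_mul]
    · linear_combination (b₃ - a₂) * x.2 ^ 2 * h3 - a₃ * x.2 ^ 2 * hb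
    · linear_combination -(b₁ * x.2 ^ 2) * h4
  refine ⟨((a₁ * b₂ - a₂ * b₁) * pN a₁ a₂ a₃ b₁ b₂ b₃ x)⁻¹ • w, ?_⟩
  rw [pmul_smul_right, hw, smul_smul, pone]
  congr 1
  field_simp

lemma pmul_pinv {x : ℝ × ℝ} (hx : ∃ y, x ∗ y = pone a₁ a₂ b₁ b₂) :
    x ∗ pinv a₁ a₂ a₃ b₁ b₂ b₃ x = pone a₁ a₂ b₁ b₂ := by
  rw [pinv, dif_pos hx]
  exact hx.choose_spec

lemma pinv_eq_of_pmul_eq_pone (hp : IsPerplexParam a₁ a₂ a₃ b₁ b₂ b₃) {x y : ℝ × ℝ}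
    (hy : x ∗ y = pone a₁ a₂ b₁ b₂) : pinv a₁ a₂ a₃ b₁ b₂ b₃ x = y :=
  calc pinv a₁ a₂ a₃ b₁ b₂ b₃ x = pinv a₁ a₂ a₃ b₁ b₂ b₃ x ∗ (x ∗ y) := by
          rw [hy, pmul_pone hp]
    _ = x ∗ pinv a₁ a₂ a₃ b₁ b₂ b₃ x ∗ y := by rw [← pmul_assoc hp, pmul_comm x]
    _ = y := by rw [pmul_pinv ⟨y, hy⟩, pone_pmul hp]

lemma pinv_smul (hp : IsPerplexParam a₁ a₂ a₃ b₁ b₂ b₃) {t : ℝ} (ht : t ≠ 0)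
    {x : ℝ × ℝ} (hx : ∃ y, x ∗ y = pone a₁ a₂ b₁ b₂) :
    pinv a₁ a₂ a₃ b₁ b₂ b₃ (t • x) = t⁻¹ • pinv a₁ a₂ a₃ b₁ b₂ b₃ x := by
  apply pinv_eq_of_pmul_eq_pone hp
  rw [pmul_smul_left, pmul_smul_right, smul_smul, mul_inv_cancel₀ ht, one_smul, pmul_pinv hx]

lemma pmul_pinv_smul_pmul (hp : IsPerplexParam a₁ a₂ a₃ b₁ b₂ b₃) {t : ℝ} (ht : t ≠ 0)
    {e : ℝ × ℝ} (he : ∃ y, e ∗ y = pone a₁ a₂ b₁ b₂) (u : ℝ × ℝ) :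
    u ∗ pinv a₁ a₂ a₃ b₁ b₂ b₃ (t • e) ∗ e = t⁻¹ • u := by
  rw [pmul_assoc hp, pinv_smul hp ht he, pmul_smul_left, pmul_smul_right, pmul_comm _ e,
    pmul_pinv he, pmul_pone hp]

lemma pmul_sub_pmul_pmul (hp : IsPerplexParam a₁ a₂ a₃ b₁ b₂ b₃) (u u' v v' w : ℝ × ℝ) :
    (u ∗ v - u' ∗ v') ∗ w = (u - u') ∗ w ∗ v + u' ∗ ((v - v') ∗ w) := by
  have hsplit : u ∗ v - u' ∗ v' = (u - u') ∗ v + u' ∗ (v - v') := by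
    ext <;> simp only [pmul, Prod.fst_sub, Prod.snd_sub, Prod.fst_add, Prod.snd_add] <;> ring
  rw [hsplit, pmul_add_left, pmul_assoc hp u', pmul_assoc hp (u - u'), pmul_comm v w,
    ← pmul_assoc hp]

lemma pN_smul (t : ℝ) (x : ℝ × ℝ) :
    pN a₁ a₂ a₃ b₁ b₂ b₃ (t • x) = t ^ 2 * pN a₁ a₂ a₃ b₁ b₂ b₃ x := by
  simp only [pN, Prod.smul_fst, Prod.smul_snd, smul_eq_mul]; ring

lemma enorm2_smul (t : ℝ) (x : ℝ × ℝ) : enorm2 (t • x) = |t| * enorm2 x := by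
  rw [enorm2, enorm2, ← Real.sqrt_sq_eq_abs, ← Real.sqrt_mul (sq_nonneg t)]
  congr 1
  simp only [Prod.smul_fst, Prod.smul_snd, smul_eq_mul]; ring

lemma enorm2_ne_zero_of_pN_ne_zero {x : ℝ × ℝ} (hN : pN a₁ a₂ a₃ b₁ b₂ b₃ x ≠ 0) :
    enorm2 x ≠ 0 := by
  intro h0
  rw [enorm2, Real.sqrt_eq_zero'] at h0
  have h1 : x.1 = 0 := by nlinarith [sq_nonneg x.1, sq_nonneg x.2]
  have h2 : x.2 = 0 := by nlinarith [sq_nonneg x.1, sq_nonneg x.2]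
  simp [pN, h1, h2] at hN

lemma posSep_smul (hp : IsPerplexParam a₁ a₂ a₃ b₁ b₂ b₃) {e : ℝ × ℝ}
    (hN : pN a₁ a₂ a₃ b₁ b₂ b₃ e ≠ 0) {v : ℕ → ℝ} (hv0 : ∀ n, v n ≠ 0)
    (hv : Tendsto v atTop (𝓝 0)) :
    PosSep a₁ a₂ a₃ b₁ b₂ b₃ (fun n => v n • e) := by
  obtain ⟨w, hw⟩ := exists_pmul_eq_pone hp hN
  have hE := enorm2_ne_zero_of_pN_ne_zero hN
  refine ⟨fun n => ⟨(v n)⁻¹ • w, ?_⟩, by simpa using hv.smul_const e,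
    |pN a₁ a₂ a₃ b₁ b₂ b₃ e| / enorm2 e ^ 2, by positivity, fun n => le_of_eq ?_⟩
  · rw [pmul_smul_left, pmul_smul_right, smul_smul, mul_inv_cancel₀ (hv0 n), one_smul, hw]
  · have hvn := hv0 n
    rw [enorm2_smul, smul_smul, pN_smul, abs_mul, abs_sq, mul_pow, inv_pow, mul_pow, sq_abs]
    field_simp

lemma continuous_pmul : Continuous (fun p : (ℝ × ℝ) × (ℝ × ℝ) => p.1 ∗ p.2) := by
  unfold pmul; fun_prop

lemma Filter.Tendsto.pmul {α : Type*} {l : Filter α} {u v : α → ℝ × ℝ} {U V : ℝ × ℝ}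
    (hu : Tendsto u l (𝓝 U)) (hv : Tendsto v l (𝓝 V)) :
    Tendsto (fun n => u n ∗ v n) l (𝓝 (U ∗ V)) :=
  (continuous_pmul.tendsto (U, V)).comp (hu.prodMk_nhds hv)

lemma ContinuousOn.pmul {s : Set (ℝ × ℝ)} {u v : ℝ × ℝ → ℝ × ℝ}
    (hu : ContinuousOn u s) (hv : ContinuousOn v s) : ContinuousOn (fun y => u y ∗ v y) s :=
  continuous_pmul.comp_continuousOn (hu.prodMk hv)

-- Along an invertible direction `e`, positively separated sequences `uₙ • e` realize every
-- real difference quotient of `τ ↦ f (p + τ • e)`.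
lemma PDiffQuotTendsto.hasDerivAt_line (hp : IsPerplexParam a₁ a₂ a₃ b₁ b₂ b₃)
    {f : ℝ × ℝ → ℝ × ℝ} {p e D : ℝ × ℝ} {t : ℝ}
    (H : PDiffQuotTendsto a₁ a₂ a₃ b₁ b₂ b₃ f (p + t • e) D)
    (hN : pN a₁ a₂ a₃ b₁ b₂ b₃ e ≠ 0) :
    HasDerivAt (fun τ : ℝ => f (p + τ • e)) (D ∗ e) t := by
  rw [hasDerivAt_iff_tendsto_slope_zero, tendsto_iff_seq_tendsto]
  intro u hu
  obtain ⟨k, hk⟩ := eventually_atTop.1 (hu self_mem_nhdsWithin)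
  have hk' : ∀ n, u (n + k) ≠ 0 := fun n => hk _ (Nat.le_add_left k n)
  have hu0 : Tendsto (fun n => u (n + k)) atTop (𝓝 0) :=
    (tendsto_add_atTop_iff_nat k).2 (hu.mono_right nhdsWithin_le_nhds)
  rw [← tendsto_add_atTop_iff_nat k]
  refine ((H _ (posSep_smul hp hN hk' hu0)).pmul tendsto_const_nhds).congr fun n => ?_
  rw [pmul_pinv_smul_pmul hp (hk' n) (exists_pmul_eq_pone hp hN)]
  simp only [Function.comp_apply, add_smul, add_assoc]

lemma norm_sub_le_of_segment_subset (hp : IsPerplexParam a₁ a₂ a₃ b₁ b₂ b₃)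
    {f d : ℝ × ℝ → ℝ × ℝ} {S : Set (ℝ × ℝ)}
    (H : ∀ z ∈ S, PDiffQuotTendsto a₁ a₂ a₃ b₁ b₂ b₃ f z (d z)) {e : ℝ × ℝ}
    (hN : pN a₁ a₂ a₃ b₁ b₂ b₃ e ≠ 0) {M : ℝ} (hM : ∀ z ∈ S, ‖d z ∗ e‖ ≤ M)
    {p : ℝ × ℝ} {s : ℝ} (hseg : segment ℝ p (p + s • e) ⊆ S) :
    ‖f (p + s • e) - f p‖ ≤ M * |s| := by
  rcases eq_or_ne s 0 with rfl | hs
  · simp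
  have hNs : pN a₁ a₂ a₃ b₁ b₂ b₃ (s • e) ≠ 0 := by
    rw [pN_smul]; exact mul_ne_zero (pow_ne_zero 2 hs) hN
  have hmem : ∀ τ ∈ Set.Icc (0 : ℝ) 1, p + τ • (s • e) ∈ S := fun τ hτ =>
    hseg (by rw [segment_eq_image']; exact ⟨τ, hτ, by simp⟩)
  have hMVT := norm_image_sub_le_of_norm_deriv_le_segment_01'
    (f := fun τ => f (p + τ • (s • e))) (f' := fun τ => d (p + τ • (s • e)) ∗ (s • e))
    (C := M * |s|)
    (fun τ hτ => ((H _ (hmem τ hτ)).hasDerivAt_line hp hNs).hasDerivWithinAt)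
    (fun τ hτ => by
      rw [pmul_smul_right, norm_smul, Real.norm_eq_abs, mul_comm M]
      exact mul_le_mul_of_nonneg_left (hM _ (hmem τ (Set.Ico_subset_Icc_self hτ)))
        (abs_nonneg s))
  simpa using hMVT

-- `σ ↦ N(σ, 1)` is a quadratic polynomial with leading coefficient `a₁b₂ - a₂b₁ ≠ 0`.
lemma exists_pN_ne_zero (hp : IsPerplexParam a₁ a₂ a₃ b₁ b₂ b₃) :
    ∃ σ : ℝ, pN a₁ a₂ a₃ b₁ b₂ b₃ (σ, 1) ≠ 0 := by
  by_contra! hcon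
  have h0 := hcon 0
  have h1 := hcon 1
  have h2 := hcon 2
  norm_num [pN] at h0 h1 h2
  exact hp.2.1 (by linear_combination (h2 - 2 * h1 + h0) / 2)

-- Bounding the derivative along the invertible directions `(1, 0)` and `(σ, 1)` on a closed
-- ball makes `f` Lipschitz along both, which controls every increment `z - y`.
lemma continuousAt_of_pDiffQuotTendsto (hp : IsPerplexParam a₁ a₂ a₃ b₁ b₂ b₃)
    {f d : ℝ × ℝ → ℝ × ℝ} {U : Set (ℝ × ℝ)} {y : ℝ × ℝ} (hU : U ∈ 𝓝 y)
    (hd : ContinuousOn d U) (H : ∀ z ∈ U, PDiffQuotTendsto a₁ a₂ a₃ b₁ b₂ b₃ f z (d z)) :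
    ContinuousAt f y := by
  obtain ⟨σ, hσ⟩ := exists_pN_ne_zero hp
  have h₁ : pN a₁ a₂ a₃ b₁ b₂ b₃ (1, 0) ≠ 0 := by simpa [pN] using hp.2.1
  obtain ⟨R, hR, hRU⟩ := Metric.nhds_basis_closedBall.mem_iff.1 hU
  have HR : ∀ z ∈ Metric.closedBall y R, PDiffQuotTendsto a₁ a₂ a₃ b₁ b₂ b₃ f z (d z) :=
    fun z hz => H z (hRU hz)
  have hbound (e : ℝ × ℝ) : ∃ M, ∀ z ∈ Metric.closedBall y R, ‖d z ∗ e‖ ≤ M :=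
    (isCompact_closedBall y R).exists_bound_of_continuousOn
      ((hd.mono hRU).pmul continuousOn_const)
  obtain ⟨M₁, hM₁⟩ := hbound (1, 0)
  obtain ⟨M₂, hM₂⟩ := hbound (σ, 1)
  let u : ℝ × ℝ → ℝ := fun z => (z - y).1 - σ * (z - y).2
  let t : ℝ × ℝ → ℝ := fun z => (z - y).2
  let q : ℝ × ℝ → ℝ × ℝ := fun z => y + u z • (1, 0)
  have hz (z : ℝ × ℝ) : q z + t z • (σ, 1) = z := by
    ext <;> simp [q, u, t]
    ring
  have hq : Tendsto q (𝓝 y) (𝓝 y) := by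
    have : Continuous q := by fun_prop
    convert this.tendsto y
    simp [q, u]
  have hball := Metric.closedBall_mem_nhds y hR
  have hest : ∀ᶠ z in 𝓝 y, ‖f z - f y‖ ≤ M₂ * |t z| + M₁ * |u z| := by
    filter_upwards [hball, hq hball] with z hzR hqR
    have hyR : y ∈ Metric.closedBall y R := Metric.mem_closedBall_self hR.le
    have e₂ := norm_sub_le_of_segment_subset hp HR hσ hM₂
      ((convex_closedBall y R).segment_subset hqR (by rwa [hz]))
    have e₁ := norm_sub_le_of_segment_subset hp HR h₁ hM₁
      ((convex_closedBall y R).segment_subset hyR hqR)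
    rw [hz] at e₂
    calc ‖f z - f y‖ = ‖(f z - f (q z)) + (f (q z) - f y)‖ := by rw [sub_add_sub_cancel]
      _ ≤ M₂ * |t z| + M₁ * |u z| := norm_add_le_of_le e₂ e₁
  have hlim : Tendsto (fun z => M₂ * |t z| + M₁ * |u z|) (𝓝 y) (𝓝 0) := by
    have : Continuous fun z => M₂ * |t z| + M₁ * |u z| := by fun_prop
    simpa [t, u] using this.tendsto y
  exact tendsto_iff_norm_sub_tendsto_zero.2
    (squeeze_zero' (.of_forall fun _ => norm_nonneg _) hest hlim)

lemma PDiffQuotTendsto.add {f g : ℝ × ℝ → ℝ × ℝ} {y Df Dg : ℝ × ℝ}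
    (hf : PDiffQuotTendsto a₁ a₂ a₃ b₁ b₂ b₃ f y Df)
    (hg : PDiffQuotTendsto a₁ a₂ a₃ b₁ b₂ b₃ g y Dg) :
    PDiffQuotTendsto a₁ a₂ a₃ b₁ b₂ b₃ (fun z => f z + g z) y (Df + Dg) := fun h hh =>
  ((hf h hh).add (hg h hh)).congr fun n => by
    rw [← pmul_add_left, add_sub_add_comm]

lemma PDiffQuotTendsto.pmul (hp : IsPerplexParam a₁ a₂ a₃ b₁ b₂ b₃)
    {f g : ℝ × ℝ → ℝ × ℝ} {y Df Dg : ℝ × ℝ}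
    (hf : PDiffQuotTendsto a₁ a₂ a₃ b₁ b₂ b₃ f y Df)
    (hg : PDiffQuotTendsto a₁ a₂ a₃ b₁ b₂ b₃ g y Dg) (hgy : ContinuousAt g y) :
    PDiffQuotTendsto a₁ a₂ a₃ b₁ b₂ b₃ (fun z => f z ∗ g z) y (Df ∗ g y + f y ∗ Dg) := by
  intro h hh
  have hg_lim : Tendsto (fun n => g (y + h n)) atTop (𝓝 (g y)) :=
    hgy.tendsto.comp (by simpa using tendsto_const_nhds.add hh.2.1)
  exact (((hf h hh).pmul hg_lim).add (tendsto_const_nhds.pmul (hg h hh))).congr fun n =>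
    (pmul_sub_pmul_pmul hp _ _ _ _ _).symm

lemma PDiffAt.add {f g : ℝ × ℝ → ℝ × ℝ} {Lf Lg x : ℝ × ℝ}
    (hf : PDiffAt a₁ a₂ a₃ b₁ b₂ b₃ f Lf x) (hg : PDiffAt a₁ a₂ a₃ b₁ b₂ b₃ g Lg x) :
    PDiffAt a₁ a₂ a₃ b₁ b₂ b₃ (fun y => f y + g y) (Lf + Lg) x := by
  obtain ⟨Uf, hUf, df, rfl, hdf, Hf⟩ := hf
  obtain ⟨Ug, hUg, dg, rfl, hdg, Hg⟩ := hg
  exact ⟨Uf ∩ Ug, inter_mem hUf hUg, fun y => df y + dg y, rfl,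
    (hdf.mono Set.inter_subset_left).add (hdg.mono Set.inter_subset_right),
    fun y hy => PDiffQuotTendsto.add (Hf y hy.1) (Hg y hy.2)⟩

lemma PDiffAt.pmul (hp : IsPerplexParam a₁ a₂ a₃ b₁ b₂ b₃) {f g : ℝ × ℝ → ℝ × ℝ}
    {Lf Lg x : ℝ × ℝ} (hf : PDiffAt a₁ a₂ a₃ b₁ b₂ b₃ f Lf x)
    (hg : PDiffAt a₁ a₂ a₃ b₁ b₂ b₃ g Lg x) :
    PDiffAt a₁ a₂ a₃ b₁ b₂ b₃ (fun y => f y ∗ g y) (Lf ∗ g x + f x ∗ Lg) x := by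
  obtain ⟨Uf, hUf, df, rfl, hdf, Hf⟩ := hf
  obtain ⟨Ug, hUg, dg, rfl, hdg, Hg⟩ := hg
  set V := interior (Uf ∩ Ug)
  have hV (y) (hy : y ∈ V) : Uf ∈ 𝓝 y ∧ Ug ∈ 𝓝 y :=
    inter_mem_iff.1 (mem_interior_iff_mem_nhds.1 hy)
  have hfc (y) (hy : y ∈ V) : ContinuousAt f y :=
    continuousAt_of_pDiffQuotTendsto hp (hV y hy).1 hdf Hf
  have hgc (y) (hy : y ∈ V) : ContinuousAt g y :=
    continuousAt_of_pDiffQuotTendsto hp (hV y hy).2 hdg Hg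
  have hVf : V ⊆ Uf := interior_subset.trans Set.inter_subset_left
  have hVg : V ⊆ Ug := interior_subset.trans Set.inter_subset_right
  refine ⟨V, interior_mem_nhds.2 (inter_mem hUf hUg), fun y => df y ∗ g y + f y ∗ dg y, rfl,
    ((hdf.mono hVf).pmul (continuousOn_of_forall_continuousAt hgc)).add
      ((continuousOn_of_forall_continuousAt hfc).pmul (hdg.mono hVg)),
    fun y hy => PDiffQuotTendsto.pmul hp (Hf y (hVf hy)) (Hg y (hVg hy)) (hgc y hy)⟩

end

/-- Sum and product rules for `ℙ_{a,b}`-differentiability. -/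
theorem pdiff_add_mul (a₁ a₂ a₃ b₁ b₂ b₃ : ℝ)
    (hp : IsPerplexParam a₁ a₂ a₃ b₁ b₂ b₃)
    (f g : ℝ × ℝ → ℝ × ℝ) (Lf Lg x : ℝ × ℝ)
    (hf : PDiffAt a₁ a₂ a₃ b₁ b₂ b₃ f Lf x) (hg : PDiffAt a₁ a₂ a₃ b₁ b₂ b₃ g Lg x) :
    PDiffAt a₁ a₂ a₃ b₁ b₂ b₃ (fun y => pmul a₁ a₂ a₃ b₁ b₂ b₃ (f y) (g y)) (pmul a₁ a₂ a₃ b₁ b₂ b₃ Lf (g x) + pmul a₁ a₂ a₃ b₁ b₂ b₃ (f x) Lg) x ∧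
    PDiffAt a₁ a₂ a₃ b₁ b₂ b₃ (fun y => f y + g y) (Lf + Lg) x :=
  ⟨hf.pmul hp hg, hf.add hg⟩
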